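/- arXiv:2307.04526 — 4 statements merged into one kernel-verified Lean document; each statement's English description precedes it below -/
import Mathlib

section
/- Let A be a real symmetric positive definite matrix partitioned in blocks A = [[A_c, C_cp], [C_pc, A_p]] with C_pc = C_cpᵀ, let Â_p = A_p − C_pc A_c⁻¹ C_cp, let S be a real symmetric positive definite m×m matrix, and let G = [G_c G_p] be an arbitrary real m×(c+p) matrix written in conformal column blocks. Defining the residual matrix G_r = G_p − G_c A_c⁻¹ C_cp, one has Tr[S⁻¹ G A⁻¹ Gᵀ] − Tr[S⁻¹ G_c A_c⁻¹ G_cᵀ] = Tr[S⁻¹ G_r Â_p⁻¹ G_rᵀ]. -/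
/-!
The Schur-complement formula for the inverse of a block matrix with invertible top-left corner
splits `G A⁻¹ Gᵀ` as `G_c A_c⁻¹ G_cᵀ + G_r Â_p⁻¹ G_rᵀ`, where the symmetry of `A_c⁻¹` identifies
the right factor of the second term with `G_rᵀ`. Multiplying by `S⁻¹` and taking traces gives
the identity.
-/

open Matrix

namespace Matrix

variable {l m n k α : Type*} [Fintype m] [Fintype n] [DecidableEq m] [DecidableEq n] [CommRing α]

theorem inv_fromBlocks_of_isUnit₁₁ {A : Matrix m m α} {B : Matrix m n α} {C : Matrix n m α}
    {D : Matrix n n α} (hA : IsUnit A) (hS : IsUnit (D - C * A⁻¹ * B)) :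
    (fromBlocks A B C D)⁻¹ =
      fromBlocks (A⁻¹ + A⁻¹ * B * (D - C * A⁻¹ * B)⁻¹ * C * A⁻¹)
        (-(A⁻¹ * B * (D - C * A⁻¹ * B)⁻¹)) (-((D - C * A⁻¹ * B)⁻¹ * C * A⁻¹))
        (D - C * A⁻¹ * B)⁻¹ := by
  let := hA.invertible
  let : Invertible (D - C * ⅟A * B) := by rw [invOf_eq_nonsing_inv]; exact hS.invertible
  let := fromBlocks₁₁Invertible A B C D
  rw [← invOf_eq_nonsing_inv, invOf_fromBlocks₁₁_eq]
  simp only [invOf_eq_nonsing_inv]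

theorem fromCols_mul_inv_fromBlocks_mul_fromRows {A : Matrix m m α} {B : Matrix m n α}
    {C : Matrix n m α} {D : Matrix n n α} (hA : IsUnit A) (hS : IsUnit (D - C * A⁻¹ * B))
    (G₁ : Matrix l m α) (G₂ : Matrix l n α) (H₁ : Matrix m k α) (H₂ : Matrix n k α) :
    fromCols G₁ G₂ * (fromBlocks A B C D)⁻¹ * fromRows H₁ H₂ =
      G₁ * A⁻¹ * H₁ + (G₂ - G₁ * A⁻¹ * B) * (D - C * A⁻¹ * B)⁻¹ * (H₂ - C * A⁻¹ * H₁) := by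
  rw [inv_fromBlocks_of_isUnit₁₁ hA hS, fromCols_mul_fromBlocks, fromCols_mul_fromRows]
  simp only [Matrix.mul_add, Matrix.add_mul, Matrix.sub_mul, Matrix.mul_sub, Matrix.neg_mul,
    Matrix.mul_neg, Matrix.mul_assoc]
  abel

end Matrix

theorem delta_eta_schur_form_general {m c p : ℕ}
    (Ac : Matrix (Fin c) (Fin c) ℝ) (Ccp : Matrix (Fin c) (Fin p) ℝ)
    (Ap : Matrix (Fin p) (Fin p) ℝ)
    (hA : (Matrix.fromBlocks Ac Ccp Ccpᵀ Ap).PosDef)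
    (S : Matrix (Fin m) (Fin m) ℝ)
    (Gc : Matrix (Fin m) (Fin c) ℝ) (Gp : Matrix (Fin m) (Fin p) ℝ) :
    (S⁻¹ * Matrix.fromCols Gc Gp * (Matrix.fromBlocks Ac Ccp Ccpᵀ Ap)⁻¹ *
        (Matrix.fromCols Gc Gp)ᵀ).trace
      - (S⁻¹ * Gc * Ac⁻¹ * Gcᵀ).trace
      = (S⁻¹ * (Gp - Gc * Ac⁻¹ * Ccp) * (Ap - Ccpᵀ * Ac⁻¹ * Ccp)⁻¹ *
          (Gp - Gc * Ac⁻¹ * Ccp)ᵀ).trace := by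
  have hAc : Ac.PosDef := hA.submatrix Sum.inl_injective
  have hSchur : IsUnit (Ap - Ccpᵀ * Ac⁻¹ * Ccp) := by
    let := hAc.isUnit.invertible
    simpa only [invOf_eq_nonsing_inv] using isUnit_fromBlocks_iff_of_invertible₁₁.mp hA.isUnit
  have hAc_symm : Ac⁻¹ᵀ = Ac⁻¹ := by
    rw [transpose_nonsing_inv, ← conjTranspose_eq_transpose_of_trivial, hAc.isHermitian.eq]
  rw [transpose_fromCols, Matrix.mul_assoc S⁻¹, Matrix.mul_assoc S⁻¹,
    fromCols_mul_inv_fromBlocks_mul_fromRows hAc.isUnit hSchur, Matrix.mul_add, trace_add,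
    transpose_sub, transpose_mul, transpose_mul, hAc_symm]
  simp only [Matrix.mul_assoc]
  ring

/-- Paper's corollary: the increase `Δη` in natural expansion score expressed via the
Schur complement.  For a symmetric positive definite block matrix
`A = [[A_c, C_cp], [C_cpᵀ, A_p]]`, a symmetric positive definite `S`, and
`G = [G_c G_p]`, with `G_r = G_p − G_c A_c⁻¹ C_cp` and `Â_p = A_p − C_pc A_c⁻¹ C_cp`:
`Tr[S⁻¹ G A⁻¹ Gᵀ] − Tr[S⁻¹ G_c A_c⁻¹ G_cᵀ] = Tr[S⁻¹ G_r Â_p⁻¹ G_rᵀ]`. -/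
theorem delta_eta_schur_form {m c p : ℕ}
    (Ac : Matrix (Fin c) (Fin c) ℝ) (Ccp : Matrix (Fin c) (Fin p) ℝ)
    (Ap : Matrix (Fin p) (Fin p) ℝ)
    (hA : (Matrix.fromBlocks Ac Ccp Ccpᵀ Ap).PosDef)
    (S : Matrix (Fin m) (Fin m) ℝ) (hS : S.PosDef)
    (Gc : Matrix (Fin m) (Fin c) ℝ) (Gp : Matrix (Fin m) (Fin p) ℝ) :
    (S⁻¹ * Matrix.fromCols Gc Gp * (Matrix.fromBlocks Ac Ccp Ccpᵀ Ap)⁻¹ *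
        (Matrix.fromCols Gc Gp)ᵀ).trace
      - (S⁻¹ * Gc * Ac⁻¹ * Gcᵀ).trace
      = (S⁻¹ * (Gp - Gc * Ac⁻¹ * Ccp) * (Ap - Ccpᵀ * Ac⁻¹ * Ccp)⁻¹ *
          (Gp - Gc * Ac⁻¹ * Ccp)ᵀ).trace :=
  delta_eta_schur_form_general Ac Ccp Ap hA S Gc Gp
end

section
/- Let N be a positive natural number and for each n ∈ {1, …, N} let g_n ∈ ℝ^m, a_{c,n} ∈ ℝ^c and a_{p,n} ∈ ℝ^p be vectors. Define A_c = (1/N) Σ_n a_{c,n} a_{c,n}ᵀ, assume A_c is invertible, and set C_pc = (1/N) Σ_n a_{p,n} a_{c,n}ᵀ and G_c = (1/N) Σ_n g_n a_{c,n}ᵀ. Define the residual activations (Ra)_n = a_{p,n} − C_pc A_c⁻¹ a_{c,n} and the residual gradients g_{r,n} = g_n − G_c A_c⁻¹ a_{c,n}. Then (1/N) Σ_n g_n (Ra)_nᵀ = (1/N) Σ_n g_{r,n} a_{p,n}ᵀ. -/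
open Matrix

lemma vmv_mulVec_right {m c p : ℕ} (u : Fin m → ℝ) (M : Matrix (Fin p) (Fin c) ℝ)
    (v : Fin c → ℝ) :
    Matrix.vecMulVec u (M *ᵥ v) = Matrix.vecMulVec u v * Mᵀ := by
  ext i j
  simp [Matrix.vecMulVec, Matrix.mul_apply, Matrix.mulVec, dotProduct,
    Finset.mul_sum]
  congr 1; ext k; ring

lemma vmv_mulVec_left {m c p : ℕ} (M : Matrix (Fin m) (Fin c) ℝ)
    (u : Fin c → ℝ) (v : Fin p → ℝ) :
    Matrix.vecMulVec (M *ᵥ u) v = M * Matrix.vecMulVec u v := by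
  ext i j
  simp [Matrix.vecMulVec, Matrix.mul_apply, Matrix.mulVec, dotProduct,
    Finset.sum_mul, mul_assoc]

lemma vmv_sub_left {m p : ℕ} (u u' : Fin m → ℝ) (v : Fin p → ℝ) :
    Matrix.vecMulVec (u - u') v = Matrix.vecMulVec u v - Matrix.vecMulVec u' v := by
  ext i j; simp [Matrix.vecMulVec, sub_mul]

lemma vmv_sub_right {m p : ℕ} (u : Fin m → ℝ) (v v' : Fin p → ℝ) :
    Matrix.vecMulVec u (v - v') = Matrix.vecMulVec u v - Matrix.vecMulVec u v' := by
  ext i j; simp [Matrix.vecMulVec, mul_sub]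

/-- Paper's lemma: the correlation of gradients with residual activations equals the
correlation of residual gradients with raw activations.  Expectations over a finite
dataset of size `N` are averages `(1/N) Σ_n`. -/
theorem residual_interchange {N m c p : ℕ} (hN : 0 < N)
    (g : Fin N → Fin m → ℝ) (ac : Fin N → Fin c → ℝ) (ap : Fin N → Fin p → ℝ)
    (Ac : Matrix (Fin c) (Fin c) ℝ)
    (hAc : Ac = (N : ℝ)⁻¹ • ∑ n : Fin N, Matrix.vecMulVec (ac n) (ac n))
    (hAcInv : IsUnit Ac.det)
    (Cpc : Matrix (Fin p) (Fin c) ℝ)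
    (hCpc : Cpc = (N : ℝ)⁻¹ • ∑ n : Fin N, Matrix.vecMulVec (ap n) (ac n))
    (Gc : Matrix (Fin m) (Fin c) ℝ)
    (hGc : Gc = (N : ℝ)⁻¹ • ∑ n : Fin N, Matrix.vecMulVec (g n) (ac n)) :
    (N : ℝ)⁻¹ • ∑ n : Fin N,
        Matrix.vecMulVec (g n) (ap n - (Cpc * Ac⁻¹) *ᵥ ac n)
      = (N : ℝ)⁻¹ • ∑ n : Fin N,
        Matrix.vecMulVec (g n - (Gc * Ac⁻¹) *ᵥ ac n) (ap n) := by
  have vmvT : ∀ {a b : ℕ} (u : Fin a → ℝ) (v : Fin b → ℝ),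
      (Matrix.vecMulVec u v)ᵀ = Matrix.vecMulVec v u := by
    intro a b u v; ext i j; simp [Matrix.vecMulVec, mul_comm]
  have hAsym : Acᵀ = Ac := by
    rw [hAc]
    simp only [Matrix.transpose_smul, Matrix.transpose_sum, vmvT]
  have hinv : (Ac⁻¹)ᵀ = Ac⁻¹ := by
    rw [Matrix.transpose_nonsing_inv, hAsym]
  have hCt : Cpcᵀ = (N : ℝ)⁻¹ • ∑ n : Fin N, Matrix.vecMulVec (ac n) (ap n) := by
    rw [hCpc]
    simp only [Matrix.transpose_smul, Matrix.transpose_sum, vmvT]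
  calc (N : ℝ)⁻¹ • ∑ n : Fin N,
        Matrix.vecMulVec (g n) (ap n - (Cpc * Ac⁻¹) *ᵥ ac n)
      = (N : ℝ)⁻¹ • ∑ n : Fin N,
        (Matrix.vecMulVec (g n) (ap n) - Matrix.vecMulVec (g n) (ac n) * (Cpc * Ac⁻¹)ᵀ) := by
        simp only [vmv_sub_right, vmv_mulVec_right]
    _ = (N : ℝ)⁻¹ • ∑ n : Fin N, Matrix.vecMulVec (g n) (ap n)
        - Gc * (Cpc * Ac⁻¹)ᵀ := by
        rw [Finset.sum_sub_distrib, smul_sub]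
        congr 1
        rw [hGc, Matrix.smul_mul]; exact congrArg _ (Matrix.sum_mul ..).symm
    _ = (N : ℝ)⁻¹ • ∑ n : Fin N, Matrix.vecMulVec (g n) (ap n)
        - (Gc * Ac⁻¹) * Cpcᵀ := by
        rw [Matrix.transpose_mul, hinv, Matrix.mul_assoc]
    _ = (N : ℝ)⁻¹ • ∑ n : Fin N,
        (Matrix.vecMulVec (g n) (ap n) - (Gc * Ac⁻¹) * Matrix.vecMulVec (ac n) (ap n)) := by
        rw [Finset.sum_sub_distrib, smul_sub]
        congr 1
        rw [hCt, Matrix.mul_smul]; exact congrArg _ (Matrix.mul_sum ..)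
    _ = (N : ℝ)⁻¹ • ∑ n : Fin N,
        Matrix.vecMulVec (g n - (Gc * Ac⁻¹) *ᵥ ac n) (ap n) := by
        simp only [vmv_sub_left, vmv_mulVec_left]
end

section
/- Let A be a real symmetric positive definite n×n matrix, let L be a real n×n matrix with L Lᵀ = A⁻¹, and let a ∈ ℝⁿ be a nonzero vector. Set μ = aᵀ L Lᵀ a (so μ > 0) and L' = L + ((√(1 − μ/(1+μ)) − 1)/μ) · L Lᵀ a aᵀ L. Then A + a aᵀ is invertible and L' L'ᵀ = (A + a aᵀ)⁻¹. -/
/-!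
Write `w = Lᵀ a`, so that the update reads `L' = L + c (L w) wᵀ`. Expanding gives
`L' L'ᵀ = L Lᵀ + (2c + c² wᵀw) (L w)(L w)ᵀ`, where `L w = A⁻¹ a` and `wᵀw = μ`. The coefficient
`c = (√(1 − μ/(1+μ)) − 1)/μ` is chosen so that `(1 + cμ)² = 1/(1+μ)`, i.e.
`2c + c²μ = −1/(1+μ)`, which turns the expansion into the Sherman–Morrison formula for
`(A + a aᵀ)⁻¹`.
-/

open Matrix

namespace Matrix

section Field

variable {K ι : Type*} [Field K] [Fintype ι] [DecidableEq ι]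

theorem add_vecMulVec_mul_inv_sub_eq_one {A : Matrix ι ι K} (hA : IsUnit A) (u v : ι → K)
    (h : 1 + v ⬝ᵥ A⁻¹ *ᵥ u ≠ 0) :
    (A + vecMulVec u v) *
      (A⁻¹ - (1 + v ⬝ᵥ A⁻¹ *ᵥ u)⁻¹ • vecMulVec (A⁻¹ *ᵥ u) (v ᵥ* A⁻¹)) = 1 := by
  have hAA : A * A⁻¹ = 1 := mul_nonsing_inv A ((isUnit_iff_isUnit_det A).mp hA)
  have hu : A *ᵥ (A⁻¹ *ᵥ u) = u := by rw [mulVec_mulVec, hAA, one_mulVec]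
  simp only [add_mul, mul_sub, Matrix.mul_smul, hAA, mul_vecMulVec, hu, vecMulVec_mul,
    vecMulVec_mulVec, op_smul_eq_smul, smul_vecMulVec, smul_smul]
  set t := v ⬝ᵥ A⁻¹ *ᵥ u
  have hcoef : (1 + t)⁻¹ + (1 + t)⁻¹ * t = 1 := by field_simp
  linear_combination (norm := module) (-hcoef) • vecMulVec u (v ᵥ* A⁻¹)

theorem isUnit_add_vecMulVec {A : Matrix ι ι K} (hA : IsUnit A) (u v : ι → K)
    (h : 1 + v ⬝ᵥ A⁻¹ *ᵥ u ≠ 0) : IsUnit (A + vecMulVec u v) :=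
  IsUnit.of_mul_eq_one _ (add_vecMulVec_mul_inv_sub_eq_one hA u v h)

theorem inv_add_vecMulVec {A : Matrix ι ι K} (hA : IsUnit A) (u v : ι → K)
    (h : 1 + v ⬝ᵥ A⁻¹ *ᵥ u ≠ 0) :
    (A + vecMulVec u v)⁻¹ =
      A⁻¹ - (1 + v ⬝ᵥ A⁻¹ *ᵥ u)⁻¹ • vecMulVec (A⁻¹ *ᵥ u) (v ᵥ* A⁻¹) :=
  inv_eq_right_inv (add_vecMulVec_mul_inv_sub_eq_one hA u v h)

end Field

theorem add_smul_vecMulVec_mul_transpose {R ι κ : Type*} [CommRing R] [Fintype κ]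
    (L : Matrix ι κ R) (w : κ → R) (c : R) :
    (L + c • vecMulVec (L *ᵥ w) w) * (L + c • vecMulVec (L *ᵥ w) w)ᵀ =
      L * Lᵀ + (2 * c + c ^ 2 * (w ⬝ᵥ w)) • vecMulVec (L *ᵥ w) (L *ᵥ w) := by
  set u := L *ᵥ w
  have hLw : L * vecMulVec w u = vecMulVec u u := mul_vecMulVec L w u
  have hwL : vecMulVec u w * Lᵀ = vecMulVec u u := by rw [vecMulVec_mul, vecMul_transpose]
  have hww : vecMulVec u w * vecMulVec w u = (w ⬝ᵥ w) • vecMulVec u u := by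
    rw [vecMulVec_mul_vecMulVec, vecMulVec_smul]
  simp only [transpose_add, transpose_smul, transpose_vecMulVec, Matrix.add_mul, Matrix.mul_add,
    Matrix.mul_smul, Matrix.smul_mul, hLw, hwL, hww]
  module

end Matrix

theorem two_mul_add_sq_mul_eq_neg_inv_one_add {μ : ℝ} (hμ : 0 < 1 + μ) (hμ0 : μ ≠ 0) :
    2 * ((√(1 - μ / (1 + μ)) - 1) / μ) + ((√(1 - μ / (1 + μ)) - 1) / μ) ^ 2 * μ =
      -(1 + μ)⁻¹ := by
  rw [one_sub_div hμ.ne', add_sub_cancel_right]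
  have hs : √(1 / (1 + μ)) ^ 2 = 1 / (1 + μ) := Real.sq_sqrt (by positivity)
  generalize √(1 / (1 + μ)) = s at hs ⊢
  have h1 : 1 + μ ≠ 0 := hμ.ne'
  field_simp at hs ⊢
  linear_combination hs

/-- Rank-one update of the inverse square root: if `L Lᵀ = A⁻¹` for a symmetric positive
definite `A`, `a ≠ 0`, `μ = aᵀ L Lᵀ a`, and
`L' = L + ((√(1 − μ/(1+μ)) − 1)/μ) L Lᵀ a aᵀ L`, then `A + a aᵀ` is invertible (and `μ > 0`)
and `L' L'ᵀ = (A + a aᵀ)⁻¹`. -/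
theorem rank_one_inverse_sqrt_update {n : ℕ}
    (A : Matrix (Fin n) (Fin n) ℝ) (hA : A.PosDef)
    (L : Matrix (Fin n) (Fin n) ℝ) (hL : L * Lᵀ = A⁻¹)
    (a : Fin n → ℝ) (ha : a ≠ 0)
    (μ : ℝ) (hμ : μ = a ⬝ᵥ (L * Lᵀ) *ᵥ a)
    (L' : Matrix (Fin n) (Fin n) ℝ)
    (hL' : L' = L + ((Real.sqrt (1 - μ / (1 + μ)) - 1) / μ) •
      (L * Lᵀ * Matrix.vecMulVec a a * L)) :
    0 < μ ∧ IsUnit (A + Matrix.vecMulVec a a) ∧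
      L' * L'ᵀ = (A + Matrix.vecMulVec a a)⁻¹ := by
  have hμA : μ = a ⬝ᵥ A⁻¹ *ᵥ a := hμ.trans (by rw [hL])
  have hμpos : 0 < μ := hμA ▸ hA.inv.dotProduct_mulVec_pos ha
  have hden : 1 + a ⬝ᵥ A⁻¹ *ᵥ a ≠ 0 := by rw [← hμA]; positivity
  set w := Lᵀ *ᵥ a
  have hLw : L *ᵥ w = A⁻¹ *ᵥ a := by rw [mulVec_mulVec, hL]
  have hww : w ⬝ᵥ w = μ := by rw [hμ, ← mulVec_mulVec, dotProduct_mulVec a L, ← mulVec_transpose]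
  have hcol : L * Lᵀ * vecMulVec a a * L = vecMulVec (L *ᵥ w) w := by
    rw [mul_vecMulVec, vecMulVec_mul, ← mulVec_mulVec, ← mulVec_transpose]
  have hsymm : a ᵥ* A⁻¹ = A⁻¹ *ᵥ a := by
    rw [← mulVec_transpose, (isHermitian_iff_isSymm.mp hA.isHermitian.inv).eq]
  refine ⟨hμpos, isUnit_add_vecMulVec hA.isUnit a a hden, ?_⟩
  rw [inv_add_vecMulVec hA.isUnit a a hden, hL', hcol, add_smul_vecMulVec_mul_transpose, hww,
    two_mul_add_sq_mul_eq_neg_inv_one_add (by positivity) hμpos.ne', hL, hLw, hsymm, ← hμA,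
    neg_smul, sub_eq_add_neg]
end

section
/- Let g : ℝ → ℝⁿ and F : ℝ → ℝ^{n×n} be differentiable at t₀, suppose F(t₀) is symmetric positive definite, let H be a real symmetric n×n matrix with g'(t₀) = −H F(t₀)⁻¹ g(t₀), and suppose the Loewner inequality 2H + F'(t₀) ⪯ 2F(t₀) holds (i.e. 2F(t₀) − 2H − F'(t₀) is positive semidefinite). Define η(t) = g(t)ᵀ F(t)⁻¹ g(t) near t₀. Then η'(t₀) ≥ −2 η(t₀). -/
/-!
With `v = F(t₀)⁻¹ g(t₀)`, the derivative of the inverse, `−F⁻¹ F' F⁻¹`, gives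
`η'(t₀) = 2 ġᵀv − vᵀF'v = −2 vᵀHv − vᵀF'v`, while `η(t₀) = vᵀFv`. Hence
`η'(t₀) + 2 η(t₀) = vᵀ(2F − 2H − F')v`, which is nonnegative by the Loewner inequality.
-/

open Matrix

theorem Matrix.IsSymm.dotProduct_mulVec {ι R : Type*} [Fintype ι] [CommSemiring R]
    {M : Matrix ι ι R} (hM : M.IsSymm) (x y : ι → R) : x ⬝ᵥ M *ᵥ y = M *ᵥ x ⬝ᵥ y := by
  rw [Matrix.dotProduct_mulVec, ← mulVec_transpose, hM.eq]

section Calculus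

variable {𝕜 ι : Type*} [NontriviallyNormedField 𝕜] [Fintype ι] {t : 𝕜}

theorem HasDerivAt.dotProduct {u v : 𝕜 → ι → 𝕜} {u' v' : ι → 𝕜}
    (hu : HasDerivAt u u' t) (hv : HasDerivAt v v' t) :
    HasDerivAt (fun s => u s ⬝ᵥ v s) (u' ⬝ᵥ v t + u t ⬝ᵥ v') t := by
  have := HasDerivAt.fun_sum (u := Finset.univ) fun i _ =>
    (hasDerivAt_pi.1 hu i).mul (hasDerivAt_pi.1 hv i)
  rwa [Finset.sum_add_distrib] at this

theorem HasDerivAt.mulVec {κ : Type*} {M : 𝕜 → Matrix κ ι 𝕜} {M' : Matrix κ ι 𝕜}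
    {v : 𝕜 → ι → 𝕜} {v' : ι → 𝕜} (hM : HasDerivAt M M' t) (hv : HasDerivAt v v' t) :
    HasDerivAt (fun s => M s *ᵥ v s) (M' *ᵥ v t + M t *ᵥ v') t :=
  hasDerivAt_pi.2 fun i => (hasDerivAt_pi.1 hM i).dotProduct hv

variable [DecidableEq ι] [CompleteSpace 𝕜]

theorem HasDerivAt.matrix_inv {F : 𝕜 → Matrix ι ι 𝕜} {F' : Matrix ι ι 𝕜}
    (hF : HasDerivAt F F' t) (h : IsUnit (F t)) :
    HasDerivAt (fun s => (F s)⁻¹) (-((F t)⁻¹ * F' * (F t)⁻¹)) t := by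
  -- Derivatives only see the topology, which the complete normed algebra structure given by the
  -- `L∞` operator norm shares with the entrywise sup norm.
  let R : NormedRing (Matrix ι ι 𝕜) := Matrix.linftyOpNormedRing
  let : NormedAlgebra 𝕜 (Matrix ι ι 𝕜) := Matrix.linftyOpNormedAlgebra
  have : @CompleteSpace (Matrix ι ι 𝕜) R.toUniformSpace := FiniteDimensional.complete 𝕜 _
  obtain ⟨u, hu⟩ := h
  simp only [nonsing_inv_eq_ringInverse, ← hu, Ring.inverse_unit]
  exact (hu ▸ hasFDerivAt_ringInverse u).comp_hasDerivAt t hF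

theorem HasDerivAt.dotProduct_inv_mulVec {g : 𝕜 → ι → 𝕜} {g' : ι → 𝕜}
    {F : 𝕜 → Matrix ι ι 𝕜} {F' : Matrix ι ι 𝕜} (hg : HasDerivAt g g' t)
    (hF : HasDerivAt F F' t) (hsymm : (F t).IsSymm) (hunit : IsUnit (F t)) :
    HasDerivAt (fun s => g s ⬝ᵥ (F s)⁻¹ *ᵥ g s)
      (2 * (g' ⬝ᵥ (F t)⁻¹ *ᵥ g t) - (F t)⁻¹ *ᵥ g t ⬝ᵥ F' *ᵥ (F t)⁻¹ *ᵥ g t) t := by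
  convert hg.dotProduct ((hF.matrix_inv hunit).mulVec hg) using 1
  rw [dotProduct_add, hsymm.inv.dotProduct_mulVec (g t) g', dotProduct_comm _ g',
    neg_mulVec, dotProduct_neg, ← mulVec_mulVec, ← mulVec_mulVec,
    hsymm.inv.dotProduct_mulVec (g t)]
  ring

end Calculus

theorem eta_decay_rate_bound_general {n : ℕ}
    (g : ℝ → (Fin n → ℝ)) (F : ℝ → Matrix (Fin n) (Fin n) ℝ)
    (t₀ : ℝ) (F' : Matrix (Fin n) (Fin n) ℝ)
    (H : Matrix (Fin n) (Fin n) ℝ)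
    (hF₀ : (F t₀).PosDef)
    (hg : HasDerivAt g (-((H * (F t₀)⁻¹) *ᵥ g t₀)) t₀)
    (hF : HasDerivAt F F' t₀)
    (hLoewner : ((2 : ℝ) • F t₀ - (2 : ℝ) • H - F').PosSemidef) :
    -2 * (g t₀ ⬝ᵥ (F t₀)⁻¹ *ᵥ g t₀) ≤
      deriv (fun t => g t ⬝ᵥ (F t)⁻¹ *ᵥ g t) t₀ := by
  have hunit := hF₀.isUnit
  rw [(hg.dotProduct_inv_mulVec hF (isHermitian_iff_isSymm.1 hF₀.isHermitian) hunit).deriv,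
    ← mulVec_mulVec]
  set v := (F t₀)⁻¹ *ᵥ g t₀
  have hgv : g t₀ = F t₀ *ᵥ v := by
    rw [mulVec_mulVec, mul_nonsing_inv _ ((isUnit_iff_isUnit_det _).1 hunit), one_mulVec]
  have hquad := hLoewner.dotProduct_mulVec_nonneg v
  simp only [star_trivial, sub_mulVec, smul_mulVec, dotProduct_sub, dotProduct_smul,
    smul_eq_mul] at hquad
  rw [neg_dotProduct, dotProduct_comm (H *ᵥ v), dotProduct_comm (g t₀), hgv]
  linarith

/-- If along a natural-gradient trajectory `ġ(t₀) = −H F(t₀)⁻¹ g(t₀)` with `H` symmetric,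
`F(t₀)` symmetric positive definite, `F` differentiable at `t₀` with derivative `F'`, and
the Loewner inequality `2H + F'(t₀) ⪯ 2F(t₀)` holds, then the natural expansion score
`η(t) = g(t)ᵀ F(t)⁻¹ g(t)` satisfies `η'(t₀) ≥ −2 η(t₀)`. -/
theorem eta_decay_rate_bound {n : ℕ}
    (g : ℝ → (Fin n → ℝ)) (F : ℝ → Matrix (Fin n) (Fin n) ℝ)
    (t₀ : ℝ) (F' : Matrix (Fin n) (Fin n) ℝ)
    (H : Matrix (Fin n) (Fin n) ℝ) (hH : H.IsSymm)
    (hF₀ : (F t₀).PosDef)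
    (hg : HasDerivAt g (-((H * (F t₀)⁻¹) *ᵥ g t₀)) t₀)
    (hF : HasDerivAt F F' t₀)
    (hLoewner : ((2 : ℝ) • F t₀ - (2 : ℝ) • H - F').PosSemidef) :
    -2 * (g t₀ ⬝ᵥ (F t₀)⁻¹ *ᵥ g t₀) ≤
      deriv (fun t => g t ⬝ᵥ (F t)⁻¹ *ᵥ g t) t₀ :=
  eta_decay_rate_bound_general g F t₀ F' H hF₀ hg hF hLoewner
end
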